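/- Let F be a μ-forest for a nonempty word w, let i₁,…,i_k be leaves of F, and form the directed graph on vertex set {1,…,k} with an edge from p to q whenever leaf i_p points to leaf i_q. Let S be a strongly connected component of this graph and let anchors(S) = {anchor(i_p) : p ∈ S}. Then all nodes in anchors(S) are pairwise siblings in F, and any two consecutive members of anchors(S) (in the left-to-right order of siblings) are at distance at most |M| from each other. In particular this includes the degenerate case where anchors(S) is the singleton containing the root. -/
import Mathlib


inductive Forest (A : Type) : Type
  | leaf : A → Forest A
  | node : List (Forest A) → Forest A

namespace Forest

mutual
  /-- The word spelled out by the leaves of a forest, from left to right. -/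
  def word {A : Type} : Forest A → List A
    | .leaf a => [a]
    | .node l => wordList l
  def wordList {A : Type} : List (Forest A) → List A
    | [] => []
    | t :: l => t.word ++ wordList l
end

mutual
  /-- The paths (sequences of child indices, from the root) of the leaves of a forest,
  in left-to-right order; the `i`-th entry is the path of the leaf carrying position `i`
  of `F.word`. -/
  def leafPaths {A : Type} : Forest A → List (List ℕ)
    | .leaf _ => [[]]
    | .node l => leafPathsList 0 l
  def leafPathsList {A : Type} : ℕ → List (Forest A) → List (List ℕ)
    | _, [] => []
    | n, t :: l => (t.leafPaths.map (n :: ·)) ++ leafPathsList (n + 1) l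
end

def children {A : Type} : Forest A → List (Forest A)
  | .leaf _ => []
  | .node l => l

/-- The subtree of a forest at a given path, if it exists. -/
def subtreeAt? {A : Type} : Forest A → List ℕ → Option (Forest A)
  | F, [] => some F
  | F, n :: p =>
    match F.children[n]? with
    | some t => t.subtreeAt? p
    | none => none

end Forest

/-- `IsForest μ c F` says `F` is a `μ`-forest (`c` standing for the cardinality `|M|`). -/
inductive IsForest {A M : Type} [Monoid M] (μ : List A → M) (c : ℕ) : Forest A → Prop
  | leaf (a : A) : IsForest μ c (.leaf a)
  | node (l : List (Forest A)) (h2 : 2 ≤ l.length)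
      (hrec : ∀ t ∈ l, IsForest μ c t)
      (h3 : 3 ≤ l.length →
        ∃ m : M, (∀ t ∈ l, μ t.word = m) ∧ m ^ c = m ^ (c + 1)) :
      IsForest μ c (.node l)

/-- `q` is a sibling of `p` at distance `d` in the left-to-right order of siblings
(every node is its own sibling at distance 0). -/
def SiblingAtDist (p q : List ℕ) (d : ℕ) : Prop :=
  (p = q ∧ d = 0) ∨
    ∃ (r : List ℕ) (a b : ℕ), p = r ++ [a] ∧ q = r ++ [b] ∧ (a - b) + (b - a) = d

/-- Node `p` observes node `q` when `q` is a sibling at distance at most `c` of an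
ancestor of `p` (a node being its own ancestor). -/
def Observes (c : ℕ) (p q : List ℕ) : Prop :=
  ∃ r : List ℕ, r <+: p ∧ ∃ d ≤ c, SiblingAtDist r q d

/-- A node is iterable when it has at least `c` left siblings and at least `c` right
siblings (not counting itself). -/
def Iterable {A : Type} (F : Forest A) (c : ℕ) (p : List ℕ) : Prop :=
  ∃ (r : List ℕ) (a : ℕ), p = r ++ [a] ∧ c ≤ a ∧
    ∃ t, F.subtreeAt? r = some t ∧ a + c + 1 ≤ t.children.length

/-- `anc` is the anchor of the leaf with path `lf`: its lowest iterable ancestor if one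
exists, and otherwise the root. -/
def IsAnchor {A : Type} (F : Forest A) (c : ℕ) (lf anc : List ℕ) : Prop :=
  (anc <+: lf ∧ Iterable F c anc ∧
    ∀ q, q <+: lf → Iterable F c q → q.length ≤ anc.length)
  ∨ ((∀ q, q <+: lf → ¬ Iterable F c q) ∧ anc = [])

/-- The leaf carrying position `i` points to the leaf carrying position `j`:
the anchor of the former observes the anchor of the latter. -/
def PointsTo {A : Type} (F : Forest A) (c : ℕ) (i j : ℕ) : Prop :=
  ∃ pi pj ai aj, F.leafPaths[i]? = some pi ∧ F.leafPaths[j]? = some pj ∧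
    IsAnchor F c pi ai ∧ IsAnchor F c pj aj ∧ Observes c ai aj


section Helpers

lemma concat_inj' {r s : List ℕ} {x y : ℕ} (h : r ++ [x] = s ++ [y]) : r = s ∧ x = y := by
  have := List.append_inj' h rfl
  simpa using this

lemma sib_length {p q : List ℕ} {d : ℕ} (h : SiblingAtDist p q d) : p.length = q.length := by
  rcases h with ⟨rfl, -⟩ | ⟨r, a, b, rfl, rfl, -⟩
  · rfl
  · simp

lemma sib_trans {a b x : List ℕ} {d₁ d₂ : ℕ} (h₁ : SiblingAtDist a b d₁)
    (h₂ : SiblingAtDist b x d₂) : ∃ d, SiblingAtDist a x d := by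
  rcases h₁ with ⟨rfl, -⟩ | ⟨r, u, v, rfl, rfl, -⟩
  · exact ⟨d₂, h₂⟩
  rcases h₂ with ⟨rfl, -⟩ | ⟨s, u', v', heq, rfl, -⟩
  · exact ⟨(u - v) + (v - u), Or.inr ⟨r, u, v, rfl, rfl, rfl⟩⟩
  · obtain ⟨rfl, rfl⟩ := concat_inj' heq
    exact ⟨(u - v') + (v' - u), Or.inr ⟨r, u, v', rfl, rfl, rfl⟩⟩

lemma anchor_unique {A : Type} {F : Forest A} {c : ℕ} {lf a b : List ℕ}
    (ha : IsAnchor F c lf a) (hb : IsAnchor F c lf b) : a = b := by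
  rcases ha with ⟨hpa, hia, hmaxa⟩ | ⟨hna, rfl⟩
  · rcases hb with ⟨hpb, hib, hmaxb⟩ | ⟨hnb, rfl⟩
    · have h1 := hmaxb a hpa hia
      have h2 := hmaxa b hpb hib
      exact (List.prefix_of_prefix_length_le hpa hpb h1).eq_of_length (le_antisymm h1 h2)
    · exact absurd hia (hnb a hpa)
  · rcases hb with ⟨hpb, hib, hmaxb⟩ | ⟨hnb, rfl⟩
    · exact absurd hib (hna b hpb)
    · rfl

lemma observes_length {c : ℕ} {a b : List ℕ} (h : Observes c a b) : b.length ≤ a.length := by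
  obtain ⟨r, hr, d, -, hsib⟩ := h
  calc b.length = r.length := (sib_length hsib).symm
    _ ≤ a.length := hr.length_le

lemma observes_sib_of_length_eq {c : ℕ} {a b : List ℕ} (h : Observes c a b)
    (hlen : a.length = b.length) : ∃ d ≤ c, SiblingAtDist a b d := by
  obtain ⟨r, hr, d, hd, hsib⟩ := h
  have hrl : r.length = a.length := by
    have h1 := hr.length_le
    have h2 : r.length = b.length := sib_length hsib
    omega
  have : r = a := hr.eq_of_length hrl
  exact ⟨d, hd, this ▸ hsib⟩

end Helpers

theorem stmt5 {A M : Type} [Monoid M] [Fintype M] (μ : List A → M)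
    (F : Forest A) (w : List A) (hw : F.word = w) (hne : w ≠ [])
    (hF : IsForest μ (Fintype.card M) F)
    {k : ℕ} (i : Fin k → Fin w.length)
    (E : Fin k → Fin k → Prop)
    (hE : ∀ p q, E p q ↔ PointsTo F (Fintype.card M) (i p : ℕ) (i q : ℕ))
    (S : Set (Fin k))
    (hS : ∃ p₀ ∈ S,
      S = {q | Relation.ReflTransGen E p₀ q ∧ Relation.ReflTransGen E q p₀})
    (anc : Set (List ℕ))
    (hanc : anc = {a | ∃ p ∈ S, ∃ pl, F.leafPaths[(i p : ℕ)]? = some pl ∧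
        IsAnchor F (Fintype.card M) pl a}) :
    (∀ a ∈ anc, ∀ b ∈ anc, ∃ d, SiblingAtDist a b d) ∧
    (∀ a ∈ anc, ∀ b ∈ anc, ∀ r na nb, a = r ++ [na] → b = r ++ [nb] → na < nb →
      (∀ x ∈ anc, ∀ nx, x = r ++ [nx] → ¬(na < nx ∧ nx < nb)) →
      nb - na ≤ Fintype.card M) := by
  classical
  set c := Fintype.card M with hc
  obtain ⟨p₀, hp₀S, hSdef⟩ := hS
  have hedge : ∀ p q, E p q → PointsTo F c (i p : ℕ) (i q : ℕ) := fun p q h => (hE p q).mp h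
  -- anchor data for a vertex
  have huniq : ∀ (x : Fin k) (a b : List ℕ),
      (∃ pl, F.leafPaths[(i x : ℕ)]? = some pl ∧ IsAnchor F c pl a) →
      (∃ pl, F.leafPaths[(i x : ℕ)]? = some pl ∧ IsAnchor F c pl b) → a = b := by
    rintro x a b ⟨pl₁, h₁, ha⟩ ⟨pl₂, h₂, hb⟩
    rw [h₁] at h₂
    cases Option.some.inj h₂
    exact anchor_unique ha hb
  -- lengths decrease along chains
  have hchain_len : ∀ {p q : Fin k}, Relation.ReflTransGen E p q →
      ∀ a b, (∃ pl, F.leafPaths[(i p : ℕ)]? = some pl ∧ IsAnchor F c pl a) →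
      (∃ pl, F.leafPaths[(i q : ℕ)]? = some pl ∧ IsAnchor F c pl b) →
      b.length ≤ a.length := by
    intro p q h
    induction h with
    | refl => intro a b ha hb; rw [huniq p a b ha hb]
    | tail h₁ hstep ih =>
      intro a b ha hb
      obtain ⟨px, pq, ax, bq, hsx, hsq, hax, hbq, hobs⟩ := hedge _ _ hstep
      have hb' : b = bq := huniq _ b bq hb ⟨pq, hsq, hbq⟩
      have h2 := observes_length hobs
      have h3 := ih a ax ha ⟨px, hsx, hax⟩
      rw [hb']
      omega
  -- membership: S is the SCC of p₀
  have hmemS : ∀ x : Fin k, x ∈ S ↔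
      Relation.ReflTransGen E p₀ x ∧ Relation.ReflTransGen E x p₀ := by
    intro x; rw [hSdef]; exact Iff.rfl
  have hancmem : ∀ x : Fin k, x ∈ S → ∀ a,
      (∃ pl, F.leafPaths[(i x : ℕ)]? = some pl ∧ IsAnchor F c pl a) → a ∈ anc := by
    intro x hx a ⟨pl, h1, h2⟩
    rw [hanc]; exact ⟨x, hx, pl, h1, h2⟩
  have hreach : ∀ p q : Fin k, p ∈ S → q ∈ S → Relation.ReflTransGen E p q := by
    intro p q hp hq
    exact ((hmemS p).mp hp).2.trans ((hmemS q).mp hq).1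
  -- all anchors in anc have equal length
  have hlen : ∀ a ∈ anc, ∀ b ∈ anc, a.length = b.length := by
    intro a ha b hb
    rw [hanc] at ha hb
    obtain ⟨p, hp, pl, hpl, hpa⟩ := ha
    obtain ⟨q, hq, ql, hql, hqb⟩ := hb
    have h1 := hchain_len (hreach p q hp hq) a b ⟨pl, hpl, hpa⟩ ⟨ql, hql, hqb⟩
    have h2 := hchain_len (hreach q p hq hp) b a ⟨ql, hql, hqb⟩ ⟨pl, hpl, hpa⟩
    omega
  -- intermediate vertices of chains within S are in S
  have hcl : ∀ p x q : Fin k, p ∈ S → q ∈ S → Relation.ReflTransGen E p x → E x q → x ∈ S := by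
    intro p x q hp hq hpx hxq
    rw [hmemS]
    exact ⟨((hmemS p).mp hp).1.trans hpx,
      (Relation.ReflTransGen.single hxq).trans ((hmemS q).mp hq).2⟩
  -- along an edge between vertices of S, anchors are siblings at distance ≤ c
  have hsib_edge : ∀ x y : Fin k, x ∈ S → y ∈ S → E x y → ∀ a b,
      (∃ pl, F.leafPaths[(i x : ℕ)]? = some pl ∧ IsAnchor F c pl a) →
      (∃ pl, F.leafPaths[(i y : ℕ)]? = some pl ∧ IsAnchor F c pl b) →
      ∃ d ≤ c, SiblingAtDist a b d := by
    intro x y hx hy hxy a b ha hb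
    obtain ⟨px, py, ax, by', hsx, hsy, hax, hby, hobs⟩ := hedge _ _ hxy
    have h1 : a = ax := huniq _ a ax ha ⟨px, hsx, hax⟩
    have h2 : b = by' := huniq _ b by' hb ⟨py, hsy, hby⟩
    subst h1; subst h2
    exact observes_sib_of_length_eq hobs
      (hlen a (hancmem x hx a ha) b (hancmem y hy b hb))
  -- siblinghood along chains within S
  have hchain_sib : ∀ p : Fin k, p ∈ S → ∀ a,
      (∃ pl, F.leafPaths[(i p : ℕ)]? = some pl ∧ IsAnchor F c pl a) →
      ∀ {q : Fin k}, Relation.ReflTransGen E p q → q ∈ S → ∀ b,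
      (∃ pl, F.leafPaths[(i q : ℕ)]? = some pl ∧ IsAnchor F c pl b) →
      ∃ d, SiblingAtDist a b d := by
    intro p hp a ha q h
    induction h with
    | refl =>
      intro hq b hb
      exact ⟨0, Or.inl ⟨huniq p a b ha hb, rfl⟩⟩
    | @tail x q h₁ hstep ih =>
      intro hq b hb
      obtain ⟨px, pq, ax, bq, hsx, hsq, hax, hbq, hobs⟩ := hedge _ _ hstep
      have hxS : x ∈ S := hcl p x q hp hq h₁ hstep
      have hdx : ∃ pl, F.leafPaths[(i x : ℕ)]? = some pl ∧ IsAnchor F c pl ax :=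
        ⟨px, hsx, hax⟩
      obtain ⟨d₁, hsib₁⟩ := ih hxS ax hdx
      obtain ⟨d₂, -, hsib₂⟩ := hsib_edge x q hxS hq hstep ax b hdx hb
      exact sib_trans hsib₁ hsib₂
  constructor
  · -- part 1
    intro a ha b hb
    have ha' := ha; have hb' := hb
    rw [hanc] at ha' hb'
    obtain ⟨p, hp, pl, hpl, hpa⟩ := ha'
    obtain ⟨q, hq, ql, hql, hqb⟩ := hb'
    exact hchain_sib p hp a ⟨pl, hpl, hpa⟩ (hreach p q hp hq) hq b ⟨ql, hql, hqb⟩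
  · -- part 2
    intro a ha b hb r na nb hae hbe hlt hgap
    have ha' := ha; have hb' := hb
    rw [hanc] at ha' hb'
    obtain ⟨p, hp, pl, hpl, hpa⟩ := ha'
    obtain ⟨q, hq, ql, hql, hqb⟩ := hb'
    have hda : ∃ pl, F.leafPaths[(i p : ℕ)]? = some pl ∧ IsAnchor F c pl a := ⟨pl, hpl, hpa⟩
    -- every anchor in anc is of the form r ++ [n]
    have hform : ∀ x ∈ anc, ∃ n, x = r ++ [n] := by
      intro x hx
      have hx' := hx
      rw [hanc] at hx'
      obtain ⟨z, hz, zl, hzl, hza⟩ := hx'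
      obtain ⟨d, hsib⟩ := hchain_sib p hp a hda (hreach p z hp hz) hz x ⟨zl, hzl, hza⟩
      rcases hsib with ⟨heq, -⟩ | ⟨s, u, v, h1, h2, -⟩
      · exact ⟨na, heq ▸ hae⟩
      · obtain ⟨rfl, rfl⟩ := concat_inj' (hae ▸ h1 : r ++ [na] = s ++ [u])
        exact ⟨v, h2⟩
    -- crossing induction
    have key : ∀ {q' : Fin k}, Relation.ReflTransGen E p q' → q' ∈ S → ∀ b',
        (∃ pl, F.leafPaths[(i q' : ℕ)]? = some pl ∧ IsAnchor F c pl b') →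
        ∀ n, b' = r ++ [n] → nb ≤ n → nb - na ≤ c := by
      intro q' h
      induction h with
      | refl =>
        intro hq' b' hb' n hbn hnbn
        have : a = b' := huniq p a b' hda hb'
        rw [hae] at this
        obtain ⟨-, rfl⟩ := concat_inj' (this.trans hbn)
        omega
      | @tail x q' h₁ hstep ih =>
        intro hq' b' hb' n hbn hnbn
        obtain ⟨px, pq, ax, bq, hsx, hsq, hax, hbq, hobs⟩ := hedge _ _ hstep
        have hxS : x ∈ S := hcl p x q' hp hq' h₁ hstep
        have hdx : ∃ pl, F.leafPaths[(i x : ℕ)]? = some pl ∧ IsAnchor F c pl ax :=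
          ⟨px, hsx, hax⟩
        have haxanc : ax ∈ anc := hancmem x hxS ax hdx
        obtain ⟨nx, hnx⟩ := hform ax haxanc
        have hnogap := hgap ax haxanc nx hnx
        have hcases : nx ≤ na ∨ nb ≤ nx := by omega
        rcases hcases with hle | hge
        · -- crossing step
          obtain ⟨d, hd, hsib⟩ := hsib_edge x q' hxS hq' hstep ax b' hdx hb'
          rcases hsib with ⟨heq, -⟩ | ⟨s, u, v, h1, h2, h3⟩
          · rw [heq, hbn] at hnx
            obtain ⟨-, rfl⟩ := concat_inj' hnx
            omega
          · obtain ⟨rfl, rfl⟩ := concat_inj' (hnx ▸ h1 : r ++ [nx] = s ++ [u])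
            obtain ⟨-, rfl⟩ := concat_inj' (hbn ▸ h2 : r ++ [n] = r ++ [v])
            omega
        · exact ih hxS ax hdx nx hnx hge
    exact key (hreach p q hp hq) hq b ⟨ql, hql, hqb⟩ nb hbe le_rfl
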